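/- For a connected regular graph G on N vertices where every vertex has degree d and |E| edges, with all distance-two concurrences summing via joint neighborhoods, the entanglement ratio satisfies Γ_v ≥ (2/(N−2))·((d−1)/d), provided all two-party concurrences for distance-one pairs vanish. -/

import Mathlib

/-!
In a triangle-free graph every path `v - u - w` of length two ends at distance two from `v`
(or back at `v`), so the joint neighbourhoods `n_{vw}` of the distance-two vertices `w` add up to
`d(d - 1)` in a `d`-regular graph. Since `n ≤ n²` on naturals, `Σ C_{vw}² ≥ (2/|E|)² d(d - 1)`, and
with `2|E| = Nd` the resulting lower bound for `Γ_v` simplifies to exactly `2(d - 1)/((N - 2)d)`.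
-/

open scoped BigOperators

/-- Joint neighborhood `n_{vw}`: number of common neighbors of `v` and `w`. -/
def jointN {V : Type*} [Fintype V] (G : SimpleGraph V)
    [DecidableRel G.Adj] (v w : V) : ℕ :=
  (Finset.univ.filter (fun u => G.Adj v u ∧ G.Adj u w)).card

namespace SimpleGraph

variable {V : Type*} [Fintype V] (G : SimpleGraph V) [DecidableRel G.Adj]

theorem two_mul_card_edgeFinset_of_degree_eq {d : ℕ} (hreg : ∀ v, G.degree v = d) :
    2 * G.edgeFinset.card = Fintype.card V * d := by
  rw [← sum_degrees_eq_twice_card_edges]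
  simp [hreg]

theorem jointN_self (v : V) : jointN G v v = G.degree v := by
  rw [jointN, ← card_neighborFinset_eq_degree]
  congr 1
  ext u
  simp [G.adj_comm u v]

theorem sum_jointN (v : V) : ∑ w, jointN G v w = ∑ u ∈ G.neighborFinset v, G.degree u := by
  calc ∑ w, jointN G v w = ∑ u, ∑ w, if G.Adj v u ∧ G.Adj u w then 1 else 0 := by
        simp only [jointN, Finset.card_filter]
        exact Finset.sum_comm
    _ = ∑ u, if G.Adj v u then G.degree u else 0 := by
        refine Finset.sum_congr rfl fun u _ => ?_
        split_ifs with h <;> simp [h, ← card_neighborFinset_eq_degree, neighborFinset_eq_filter]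
    _ = ∑ u ∈ G.neighborFinset v, G.degree u := by
        rw [← Finset.sum_filter, neighborFinset_eq_filter]

variable {G} [DecidableEq V]

theorem jointN_eq_zero_of_dist_ne_two (htri : G.CliqueFree 3) {v w : V} (hvw : v ≠ w)
    (hdist : G.dist v w ≠ 2) : jointN G v w = 0 := by
  refine Finset.card_eq_zero.2 (Finset.filter_eq_empty_iff.2 fun u _ ⟨hvu, huw⟩ => hdist ?_)
  have hvw' : ¬ G.Adj v w := fun h => htri {v, u, w} (is3Clique_triple_iff.2 ⟨hvu, h, huw⟩)
  have hle : G.dist v w ≤ 2 := dist_le (hvu.toWalk.append huw.toWalk)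
  have hreach : G.Reachable v w := hvu.reachable.trans huw.reachable
  have h0 : G.dist v w ≠ 0 := fun h => hvw (hreach.dist_eq_zero_iff.1 h)
  have h1 : G.dist v w ≠ 1 := fun h => hvw' (dist_eq_one_iff_adj.1 h)
  omega

theorem sum_jointN_dist_two_add_degree (htri : G.CliqueFree 3) (v : V) :
    ∑ w ∈ Finset.univ.erase v, (if G.dist v w = 2 then jointN G v w else 0) + G.degree v
      = ∑ u ∈ G.neighborFinset v, G.degree u := by
  rw [← sum_jointN, ← Finset.sum_erase_add _ _ (Finset.mem_univ v), jointN_self]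
  congr 1
  refine Finset.sum_congr rfl fun w hw => ?_
  split_ifs with h
  · rfl
  · exact (jointN_eq_zero_of_dist_ne_two htri (Finset.ne_of_mem_erase hw).symm h).symm

end SimpleGraph

theorem sq_mul_sum_natCast_le_sum_sq {ι : Type*} (s : Finset ι) (f : ι → ℕ) (c : ℝ) :
    c ^ 2 * ∑ i ∈ s, (f i : ℝ) ≤ ∑ i ∈ s, (c * f i) ^ 2 := by
  rw [Finset.mul_sum]
  refine Finset.sum_le_sum fun i _ => ?_
  rw [mul_pow]
  gcongr
  exact_mod_cast Nat.le_self_pow two_ne_zero (f i)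

theorem stmt17_general {N d : ℕ} (G : SimpleGraph (Fin N)) [DecidableRel G.Adj]
    (hreg : ∀ v, G.degree v = d)
    (htri : G.CliqueFree 3) (hd : 0 < d) (hN : 2 < N) :
    ∀ v : Fin N,
      (∑ w ∈ Finset.univ.erase v,
          (if G.dist v w = 2 then
            (2 / (G.edgeFinset.card : ℝ)) * (jointN G v w : ℝ) else 0) ^ 2) /
        (4 * (d : ℝ) * ((G.edgeFinset.card : ℝ) - (d : ℝ)) / (G.edgeFinset.card : ℝ) ^ 2)
      ≥ (2 / ((N : ℝ) - 2)) * (((d : ℝ) - 1) / (d : ℝ)) := by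
  intro v
  set m : ℝ := (G.edgeFinset.card : ℝ)
  set n : Fin N → ℕ := fun w => if G.dist v w = 2 then jointN G v w else 0
  have hm : 2 * m = N * d := by
    simpa using congrArg (Nat.cast : ℕ → ℝ) (G.two_mul_card_edgeFinset_of_degree_eq hreg)
  have hpaths : ∑ w ∈ Finset.univ.erase v, (n w : ℝ) = d * (d - 1) := by
    have h := G.sum_jointN_dist_two_add_degree htri v
    simp only [hreg, Finset.sum_const, SimpleGraph.card_neighborFinset_eq_degree,
      smul_eq_mul] at h
    have h' : ((∑ w ∈ Finset.univ.erase v, n w : ℕ) : ℝ) + d = d * d := by exact_mod_cast h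
    push_cast at h'
    linarith
  have hnum := sq_mul_sum_natCast_le_sum_sq (Finset.univ.erase v) n (2 / m)
  rw [hpaths] at hnum
  have hd' : (0 : ℝ) < d := by exact_mod_cast hd
  have hN' : (2 : ℝ) < N := by exact_mod_cast hN
  have hmd : 0 < m - d := by nlinarith
  have hm0 : m ≠ 0 := by linarith
  rw [ge_iff_le]
  calc 2 / ((N : ℝ) - 2) * ((d - 1) / d)
      = (2 / m) ^ 2 * (d * (d - 1)) / (4 * d * (m - d) / m ^ 2) := by
        have : (N : ℝ) - 2 ≠ 0 := by linarith
        field_simp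
        linear_combination (2 * ((d : ℝ) - 1)) * hm
    _ ≤ _ := by
        gcongr
        refine hnum.trans_eq (Finset.sum_congr rfl fun w _ => ?_)
        split_ifs with h <;> simp [n, h]

/-- For a connected `d`-regular triangle-free graph on `N` vertices, where the
two-party concurrence of the excitation-state is `(2/|E|)·n_{vw}` for
distance-two pairs and vanishes otherwise, the entanglement ratio
`Γ_v = Σ_{w≠v} C_{vw}² / C_{v|rest}²` (with `C_{v|rest}² = 4d(|E|−d)/|E|²`)
satisfies `Γ_v ≥ (2/(N−2))·((d−1)/d)`. -/
theorem stmt17 {N d : ℕ} (G : SimpleGraph (Fin N)) [DecidableRel G.Adj]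
    (hconn : G.Connected) (hreg : ∀ v, G.degree v = d)
    (htri : G.CliqueFree 3) (hd : 0 < d) (hN : 2 < N) :
    ∀ v : Fin N,
      (∑ w ∈ Finset.univ.erase v,
          (if G.dist v w = 2 then
            (2 / (G.edgeFinset.card : ℝ)) * (jointN G v w : ℝ) else 0) ^ 2) /
        (4 * (d : ℝ) * ((G.edgeFinset.card : ℝ) - (d : ℝ)) / (G.edgeFinset.card : ℝ) ^ 2)
      ≥ (2 / ((N : ℝ) - 2)) * (((d : ℝ) - 1) / (d : ℝ)) :=
  stmt17_general G hreg htri hd hN
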